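/- Let d ≥ 1, let ℓ be a length scale with 0 < ℓ ≤ 2/√π, and let 0 < h < 1. Then the aliasing error for the squared-exponential kernel is bounded uniformly over x ∈ [−1,1]^d by | Σ_{n ∈ ℤ^d, n ≠ 0} G_ℓ(x + n/h) | ≤ 2d · 3^d · exp(−(1/2)((h^{-1}−1)/ℓ)²). -/

import Mathlib

/-!
Write `c = (2ℓ²)⁻¹` and `δ = h⁻¹`. The kernel factorises over coordinates,
`G_ℓ(x + δn) = ∏ᵢ exp(-c (xᵢ + δnᵢ)²)`, and `ℓ ≤ 2/√π` means `c ≥ π/8`. Since `n ≠ 0` forces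
some `nᵢ ≠ 0`, the sum is at most `∑ᵢ Tᵢ ∏_{j ≠ i} Sⱼ`, where `Sⱼ` is the full one-dimensional
sum in coordinate `j` and `Tᵢ` the one without the term `nᵢ = 0`.

By Jacobi's transformation formula a shifted Gaussian sum `∑ₖ exp(-c (k + x)²)` has nonnegative
Fourier coefficients, so it is largest at `x = 0`; there it is `1 + 2 ∑_{k ≥ 1} exp(-c k²) ≤ 3`
for `c ≥ π/8`. Hence `Sⱼ ≤ 3`. For `|y| ≤ 1`, `δ ≥ 1` and `k ≠ 0` one has
`(y + δk)² ≥ (δ - 1)² + (|k| - 1)²`, so `Tᵢ ≤ 4 exp(-c (δ - 1)²)`, and altogether the sum is at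
most `4d · 3^(d-1) · exp(-c (δ - 1)²)`.
-/

/-- The squared-exponential kernel `G_ℓ(x) = exp(−|x|²/(2ℓ²))` on `ℝ^d`. -/
noncomputable def G (d : ℕ) (ℓ : ℝ) (x : EuclideanSpace ℝ (Fin d)) : ℝ :=
  Real.exp (-‖x‖ ^ 2 / (2 * ℓ ^ 2))

/-- The lattice point `c·n ∈ ℝ^d` for `n ∈ ℤ^d` and a scalar `c`. -/
noncomputable def lpt (d : ℕ) (c : ℝ) (n : Fin d → ℤ) : EuclideanSpace ℝ (Fin d) :=
  (EuclideanSpace.equiv (Fin d) ℝ).symm (fun i => c * (n i : ℝ))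

open Real Finset

lemma exp_neg_pi_div_eight_le : rexp (-(π / 8)) ≤ 0.68 := by
  have hπ : (0.3926 : ℝ) ≤ π / 8 := by linarith [pi_gt_d4]
  have hTaylor : ∑ i ∈ range 4, (0.3926 : ℝ) ^ i / i.factorial ≤ rexp (π / 8) :=
    (sum_le_exp_of_nonneg (by norm_num) 4).trans (exp_le_exp.mpr hπ)
  simp only [sum_range_succ, sum_range_zero, Nat.factorial] at hTaylor
  rw [exp_neg, inv_le_comm₀ (exp_pos _) (by norm_num)]
  norm_num at hTaylor ⊢
  linarith

lemma exp_neg_add_exp_neg_pow_three_le_one {c : ℝ} (hc : π / 8 ≤ c) :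
    rexp (-c) + rexp (-c) ^ 3 ≤ 1 := by
  have hr : rexp (-c) ≤ 0.68 := (exp_le_exp.mpr (by linarith)).trans exp_neg_pi_div_eight_le
  nlinarith [pow_le_pow_left₀ (exp_pos (-c)).le hr 3]

lemma summable_exp_neg_mul_int_sq {c : ℝ} (hc : 0 < c) :
    Summable fun n : ℤ ↦ rexp (-c * n ^ 2) := by
  refine (summable_pow_mul_jacobiTheta₂_term_bound 0 (T := c / π) (by positivity) 0).congr
    fun n ↦ ?_
  field_simp
  ring_nf

lemma summable_exp_neg_mul_nat_sq {c : ℝ} (hc : 0 < c) :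
    Summable fun n : ℕ ↦ rexp (-c * n ^ 2) :=
  ((summable_exp_neg_mul_int_sq hc).comp_injective Nat.cast_injective).congr fun n ↦ by simp

lemma summable_exp_neg_mul_add_mul_sq {c δ : ℝ} (hc : 0 < c) (hδ : δ ≠ 0) (y : ℝ) :
    Summable fun n : ℤ ↦ rexp (-c * (y + δ * n) ^ 2) := by
  refine ((summable_exp_neg_mul_int_sq (c := c * δ ^ 2 / 2) (by positivity)).mul_left
    (rexp (c * y ^ 2))).of_nonneg_of_le (fun _ ↦ (exp_pos _).le) fun n ↦ ?_
  rw [← exp_add, exp_le_exp]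
  nlinarith [sq_nonneg (δ * n + 2 * y), mul_nonneg hc.le (sq_nonneg (δ * n + 2 * y))]

/-- Since `(n + 1) ^ 2 ≥ 1 + 3 n`, the series is dominated by a geometric one of ratio
`exp (-3c)`. -/
lemma tsum_exp_neg_mul_nat_add_one_sq_le_one {c : ℝ} (hc : π / 8 ≤ c) :
    ∑' n : ℕ, rexp (-c * (n + 1) ^ 2) ≤ 1 := by
  have hc0 : 0 < c := lt_of_lt_of_le (by positivity) hc
  set r := rexp (-c)
  have hr3 : r ^ 3 < 1 :=
    pow_lt_one₀ (exp_pos _).le (exp_lt_one_iff.mpr (by linarith)) three_ne_zero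
  have hle : ∀ n : ℕ, rexp (-c * (n + 1) ^ 2) ≤ r * (r ^ 3) ^ n := fun n ↦ by
    have hn : (n : ℝ) ≤ n ^ 2 := by exact_mod_cast Nat.le_self_pow two_ne_zero n
    rw [← pow_mul, ← exp_nat_mul, ← exp_add, exp_le_exp]
    push_cast
    nlinarith [mul_le_mul_of_nonneg_left hn hc0.le]
  have hgeom : HasSum (fun n : ℕ ↦ r * (r ^ 3) ^ n) (r * (1 - r ^ 3)⁻¹) :=
    (hasSum_geometric_of_lt_one (by positivity) hr3).mul_left r
  calc ∑' n : ℕ, rexp (-c * (n + 1) ^ 2) ≤ r * (1 - r ^ 3)⁻¹ := by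
        rw [← hgeom.tsum_eq]
        exact (hgeom.summable.of_nonneg_of_le (fun _ ↦ (exp_pos _).le) hle).tsum_le_tsum hle
          hgeom.summable
    _ ≤ 1 := by
        rw [mul_inv_le_iff₀ (by linarith), one_mul]
        linarith [exp_neg_add_exp_neg_pow_three_le_one hc]

lemma tsum_exp_neg_mul_nat_sq_le_two {c : ℝ} (hc : π / 8 ≤ c) :
    ∑' n : ℕ, rexp (-c * n ^ 2) ≤ 2 := by
  have hc0 : 0 < c := lt_of_lt_of_le (by positivity) hc
  rw [(summable_exp_neg_mul_nat_sq hc0).tsum_eq_zero_add]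
  push_cast
  rw [zero_pow two_ne_zero, mul_zero, exp_zero]
  linarith [tsum_exp_neg_mul_nat_add_one_sq_le_one hc]

lemma tsum_exp_neg_mul_int_sq_le_three {c : ℝ} (hc : π / 8 ≤ c) :
    ∑' n : ℤ, rexp (-c * n ^ 2) ≤ 3 := by
  have hc0 : 0 < c := lt_of_lt_of_le (by positivity) hc
  have hs := summable_exp_neg_mul_int_sq hc0
  rw [tsum_of_nat_of_neg_add_one (f := fun n : ℤ ↦ rexp (-c * n ^ 2))
    (hs.comp_injective Nat.cast_injective)
    (hs.comp_injective (neg_injective.comp ((add_left_injective 1).comp Nat.cast_injective)))]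
  push_cast
  simp only [neg_sq]
  linarith [tsum_exp_neg_mul_nat_sq_le_two hc, tsum_exp_neg_mul_nat_add_one_sq_le_one hc]

section Poisson

open Complex

lemma norm_tsum_ofReal_of_nonneg {ι : Type*} {g : ι → ℝ} (hg : ∀ n, 0 ≤ g n) :
    ‖∑' n, (g n : ℂ)‖ = ∑' n, g n := by
  rw [← ofReal_tsum, norm_real, Real.norm_of_nonneg (tsum_nonneg hg)]

lemma norm_exp_neg_div_mul_add_I_mul_sq {a : ℝ} (b : ℝ) (n : ℤ) :
    ‖cexp (-π / a * (n + I * b) ^ 2)‖ = rexp (π * b ^ 2 / a) * rexp (-(π / a) * n ^ 2) := by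
  rw [← Real.exp_add, Complex.norm_exp]
  congr 1
  have : -π / (a : ℂ) * (n + I * b) ^ 2
      = ((π * b ^ 2 / a + -(π / a) * n ^ 2 : ℝ) : ℂ) + ((-2 * π * b * n / a : ℝ) : ℂ) * I := by
    push_cast
    ring_nf
    rw [I_sq]
    ring
  rw [this, add_re, ofReal_re, re_ofReal_mul, I_re, mul_zero, add_zero]

/-- Jacobi's transformation formula, with and without the linear term: the common prefactor
`a ^ (-1/2)` cancels, and on the transformed side `b` only contributes a phase and the factor
`exp (π b² / a)`. -/
lemma norm_tsum_exp_neg_quadratic_le {a : ℝ} (ha : 0 < a) (b : ℝ) :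
    ‖∑' n : ℤ, cexp (-π * a * n ^ 2 + 2 * π * b * n)‖
      ≤ rexp (π * b ^ 2 / a) * ‖∑' n : ℤ, cexp (-π * a * n ^ 2)‖ := by
  have ha' : 0 < (a : ℂ).re := by simpa using ha
  rw [tsum_exp_neg_quadratic ha', Complex.tsum_exp_neg_mul_int_sq ha', norm_mul, norm_mul,
    mul_left_comm]
  gcongr
  have hs : Summable fun n : ℤ ↦ rexp (-(π / a) * n ^ 2) :=
    summable_exp_neg_mul_int_sq (by positivity)
  have hreal : ∑' n : ℤ, cexp (-π / a * n ^ 2) = ∑' n : ℤ, ((rexp (-(π / a) * n ^ 2) : ℝ) : ℂ) :=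
    tsum_congr fun n ↦ by push_cast; ring_nf
  calc ‖∑' n : ℤ, cexp (-π / a * (n + I * b) ^ 2)‖
      ≤ ∑' n : ℤ, rexp (π * b ^ 2 / a) * rexp (-(π / a) * n ^ 2) := by
        simp_rw [← norm_exp_neg_div_mul_add_I_mul_sq]
        refine norm_tsum_le_tsum_norm ?_
        simpa only [norm_exp_neg_div_mul_add_I_mul_sq] using hs.mul_left _
    _ = rexp (π * b ^ 2 / a) * ‖∑' n : ℤ, cexp (-π / a * n ^ 2)‖ := by
        rw [tsum_mul_left, hreal, norm_tsum_ofReal_of_nonneg fun _ ↦ (Real.exp_pos _).le]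

lemma tsum_exp_neg_mul_int_add_sq_le {c : ℝ} (hc : 0 < c) (x : ℝ) :
    ∑' n : ℤ, rexp (-c * (n + x) ^ 2) ≤ ∑' n : ℤ, rexp (-c * n ^ 2) := by
  have key := norm_tsum_exp_neg_quadratic_le (a := c / π) (by positivity) (-c * x / π)
  have hlhs : ∑' n : ℤ, cexp (-π * (c / π : ℝ) * n ^ 2 + 2 * π * (-c * x / π : ℝ) * n)
      = ∑' n : ℤ, ((rexp (c * x ^ 2) * rexp (-c * (n + x) ^ 2) : ℝ) : ℂ) := by
    refine tsum_congr fun n ↦ ?_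
    rw [← Real.exp_add, ofReal_exp]
    congr 1
    push_cast
    field_simp
    ring
  have hrhs : ∑' n : ℤ, cexp (-π * (c / π : ℝ) * n ^ 2)
      = ∑' n : ℤ, ((rexp (-c * n ^ 2) : ℝ) : ℂ) := by
    refine tsum_congr fun n ↦ ?_
    rw [ofReal_exp]
    congr 1
    push_cast
    field_simp
  rw [hlhs, hrhs, norm_tsum_ofReal_of_nonneg fun _ ↦ by positivity,
    norm_tsum_ofReal_of_nonneg fun _ ↦ (Real.exp_pos _).le, tsum_mul_left] at key
  have hcoef : π * (-c * x / π) ^ 2 / (c / π) = c * x ^ 2 := by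
    field_simp
  rw [hcoef] at key
  exact le_of_mul_le_mul_left key (Real.exp_pos _)

end Poisson

lemma tsum_exp_neg_mul_add_mul_sq_le_three {c δ : ℝ} (hc : π / 8 ≤ c) (hδ : 1 ≤ δ) (y : ℝ) :
    ∑' n : ℤ, rexp (-c * (y + δ * n) ^ 2) ≤ 3 := by
  have hc0 : 0 < c := lt_of_lt_of_le (by positivity) hc
  have hδ0 : 0 < δ := one_pos.trans_le hδ
  have hrescale : ∀ n : ℤ, -c * (y + δ * n) ^ 2 = -(c * δ ^ 2) * (n + y / δ) ^ 2 := fun n ↦ by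
    field_simp
    ring
  simp_rw [hrescale]
  refine (tsum_exp_neg_mul_int_add_sq_le (by positivity) _).trans
    (tsum_exp_neg_mul_int_sq_le_three (hc.trans ?_))
  nlinarith [one_le_pow₀ (n := 2) hδ]

lemma sq_sub_one_add_sq_le {δ y : ℝ} (hδ : 1 ≤ δ) (hy : |y| ≤ 1) (n : ℕ) :
    (δ - 1) ^ 2 + n ^ 2 ≤ (y + δ * (n + 1)) ^ 2 := by
  have hn : (0 : ℝ) ≤ n := n.cast_nonneg
  have hD : 0 ≤ δ - 1 := sub_nonneg.mpr hδ
  have hlow : (δ - 1) * n + (δ - 1) + n ≤ y + δ * (n + 1) := by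
    linarith [(abs_le.mp hy).1]
  calc (δ - 1) ^ 2 + n ^ 2 ≤ ((δ - 1) * n + (δ - 1) + n) ^ 2 := by
        nlinarith [mul_nonneg hD hn, mul_nonneg (mul_nonneg hD hn) (mul_nonneg hD hn),
          mul_nonneg (mul_nonneg hD hn) hD, mul_nonneg (mul_nonneg hD hn) hn]
    _ ≤ (y + δ * (n + 1)) ^ 2 := pow_le_pow_left₀ (by positivity) hlow 2

lemma tsum_exp_neg_mul_add_mul_nat_add_one_sq_le {c δ y : ℝ} (hc : π / 8 ≤ c) (hδ : 1 ≤ δ)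
    (hy : |y| ≤ 1) :
    ∑' n : ℕ, rexp (-c * (y + δ * (n + 1)) ^ 2) ≤ 2 * rexp (-c * (δ - 1) ^ 2) := by
  have hc0 : 0 < c := lt_of_lt_of_le (by positivity) hc
  have hle : ∀ n : ℕ,
      rexp (-c * (y + δ * (n + 1)) ^ 2) ≤ rexp (-c * (δ - 1) ^ 2) * rexp (-c * n ^ 2) := fun n ↦ by
    rw [← exp_add, exp_le_exp]
    nlinarith [sq_sub_one_add_sq_le hδ hy n]
  have hs := (summable_exp_neg_mul_nat_sq hc0).mul_left (rexp (-c * (δ - 1) ^ 2))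
  calc ∑' n : ℕ, rexp (-c * (y + δ * (n + 1)) ^ 2)
      ≤ ∑' n : ℕ, rexp (-c * (δ - 1) ^ 2) * rexp (-c * n ^ 2) :=
        (hs.of_nonneg_of_le (fun _ ↦ (exp_pos _).le) hle).tsum_le_tsum hle hs
    _ ≤ rexp (-c * (δ - 1) ^ 2) * 2 := by
        rw [tsum_mul_left]
        exact mul_le_mul_of_nonneg_left (tsum_exp_neg_mul_nat_sq_le_two hc) (exp_pos _).le
    _ = 2 * rexp (-c * (δ - 1) ^ 2) := mul_comm _ _

lemma tsum_indicator_exp_neg_mul_add_mul_sq_le {c δ y : ℝ} (hc : π / 8 ≤ c) (hδ : 1 ≤ δ)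
    (hy : |y| ≤ 1) :
    ∑' n : ℤ, ({0}ᶜ : Set ℤ).indicator (fun n ↦ rexp (-c * (y + δ * n) ^ 2)) n
      ≤ 4 * rexp (-c * (δ - 1) ^ 2) := by
  have hc0 : 0 < c := lt_of_lt_of_le (by positivity) hc
  set g := ({0}ᶜ : Set ℤ).indicator (fun n ↦ rexp (-c * (y + δ * n) ^ 2))
  have hg := (summable_exp_neg_mul_add_mul_sq (δ := δ) hc0 (by positivity) y).indicator {0}ᶜ
  have hpos : ∀ n : ℕ, g (n + 1) = rexp (-c * (y + δ * (n + 1)) ^ 2) := fun n ↦ by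
    simp only [g]
    rw [Set.indicator_of_mem (by simp; omega)]
    push_cast
    rfl
  have hneg : ∀ n : ℕ, g (-(n + 1)) = rexp (-c * (-y + δ * (n + 1)) ^ 2) := fun n ↦ by
    simp only [g]
    rw [Set.indicator_of_mem (by simp; omega)]
    push_cast
    ring_nf
  rw [tsum_of_add_one_of_neg_add_one (f := g)
    (hg.comp_injective ((add_left_injective 1).comp Nat.cast_injective))
    (hg.comp_injective (neg_injective.comp ((add_left_injective 1).comp Nat.cast_injective)))]
  have hzero : g 0 = 0 := Set.indicator_of_notMem (by simp) _
  simp only [hpos, hneg, hzero, add_zero]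
  linarith [tsum_exp_neg_mul_add_mul_nat_add_one_sq_le hc hδ hy,
    tsum_exp_neg_mul_add_mul_nat_add_one_sq_le hc hδ (y := -y) (by rwa [abs_neg])]

lemma hasSum_prod_of_nonneg {κ : Type*} {d : ℕ} (f : Fin d → κ → ℝ) (hf : ∀ i k, 0 ≤ f i k)
    (hs : ∀ i, Summable (f i)) :
    HasSum (fun n : Fin d → κ ↦ ∏ i, f i (n i)) (∏ i, ∑' k, f i k) := by
  induction d with
  | zero => simp
  | succ d ih =>
    have htail := ih (fun i ↦ f i.succ) (fun i ↦ hf i.succ) (fun i ↦ hs i.succ)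
    set P : (Fin d → κ) → ℝ := fun m ↦ ∏ i, f i.succ (m i)
    have hP : ∀ m, 0 ≤ P m := fun m ↦ prod_nonneg fun i _ ↦ hf i.succ _
    have hpair : HasSum (fun p : κ × (Fin d → κ) ↦ f 0 p.1 * P p.2)
        ((∑' k, f 0 k) * ∏ i : Fin d, ∑' k, f i.succ k) :=
      (hs 0).hasSum.mul htail ((hs 0).mul_of_nonneg htail.summable (hf 0) hP)
    rw [Fin.prod_univ_succ, ← (Fin.consEquiv fun _ ↦ κ).hasSum_iff]
    convert hpair using 2 with p
    simp [Fin.consEquiv, Fin.prod_univ_succ, P]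

lemma tsum_indicator_prod_le {κ : Type*} [Zero κ] {d : ℕ} (f : Fin d → κ → ℝ) {A ε : ℝ}
    (hf : ∀ i k, 0 ≤ f i k) (hs : ∀ i, Summable (f i)) (hA : ∀ i, ∑' k, f i k ≤ A)
    (hε : ∀ i, ∑' k, ({0}ᶜ : Set κ).indicator (f i) k ≤ ε) :
    ∑' n : Fin d → κ, ({0}ᶜ : Set (Fin d → κ)).indicator (fun n ↦ ∏ i, f i (n i)) n
      ≤ d * A ^ (d - 1) * ε := by
  set g : Fin d → Fin d → κ → ℝ := fun i ↦ Function.update f i (({0}ᶜ : Set κ).indicator (f i))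
  have hg0 : ∀ i j k, 0 ≤ g i j k := fun i j k ↦ by
    rcases eq_or_ne j i with rfl | hj
    · simpa [g] using Set.indicator_nonneg (fun k _ ↦ hf j k) k
    · simpa [g, hj] using hf j k
  have hgs : ∀ i j, Summable (g i j) := fun i j ↦ by
    rcases eq_or_ne j i with rfl | hj
    · simpa [g] using (hs j).indicator _
    · simpa [g, hj] using hs j
  have hsum := hasSum_sum (s := univ) fun i _ ↦ hasSum_prod_of_nonneg (g i) (hg0 i) (hgs i)
  have hcover : ∀ n, ({0}ᶜ : Set (Fin d → κ)).indicator (fun n ↦ ∏ i, f i (n i)) n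
      ≤ ∑ i, ∏ j, g i j (n j) := fun n ↦ by
    by_cases hn : n = 0
    · rw [Set.indicator_of_notMem (by simpa using hn)]
      exact sum_nonneg fun i _ ↦ prod_nonneg fun j _ ↦ hg0 i j _
    · obtain ⟨i, hi⟩ := Function.ne_iff.mp hn
      rw [Set.indicator_of_mem (by simpa using hn)]
      refine le_of_eq_of_le ?_ (single_le_sum (fun i _ ↦ prod_nonneg fun j _ ↦ hg0 i j _)
        (mem_univ i))
      refine prod_congr rfl fun j _ ↦ ?_
      rcases eq_or_ne j i with rfl | hj
      · simp [g, Set.indicator_of_mem (show n j ∈ ({0}ᶜ : Set κ) from hi)]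
      · simp [g, hj]
  have hterm : ∀ i, ∏ j, ∑' k, g i j k ≤ A ^ (d - 1) * ε := fun i ↦ by
    have hupdate : (fun j ↦ ∑' k, g i j k)
        = Function.update (fun j ↦ ∑' k, f j k) i (∑' k, ({0}ᶜ : Set κ).indicator (f i) k) := by
      ext j
      rcases eq_or_ne j i with rfl | hj <;> simp [g, *]
    have hA0 : 0 ≤ A := (tsum_nonneg (hf i)).trans (hA i)
    rw [hupdate, prod_update_of_mem (mem_univ i), mul_comm]
    refine mul_le_mul ?_ (hε i)
      (tsum_nonneg fun k ↦ Set.indicator_nonneg (fun k _ ↦ hf i k) k) (by positivity)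
    calc ∏ j ∈ univ \ {i}, ∑' k, f j k ≤ ∏ _j ∈ univ \ {i}, A :=
          prod_le_prod (fun j _ ↦ tsum_nonneg (hf j)) fun j _ ↦ hA j
      _ = A ^ (d - 1) := by simp [card_sdiff]
  calc _ ≤ ∑ i, ∏ j, ∑' k, g i j k :=
        hsum.tsum_eq ▸ (hsum.summable.of_nonneg_of_le (fun _ ↦ Set.indicator_nonneg
          (fun _ _ ↦ prod_nonneg fun _ _ ↦ hf _ _) _) hcover).tsum_le_tsum hcover hsum.summable
    _ ≤ ∑ _i : Fin d, A ^ (d - 1) * ε := sum_le_sum fun i _ ↦ hterm i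
    _ = d * A ^ (d - 1) * ε := by simp [mul_assoc]

lemma G_add_lpt_eq_prod (d : ℕ) (ℓ c : ℝ) (x : EuclideanSpace ℝ (Fin d)) (n : Fin d → ℤ) :
    G d ℓ (x + lpt d c n) = ∏ i, rexp (-(2 * ℓ ^ 2)⁻¹ * (x i + c * n i) ^ 2) := by
  rw [G, ← exp_sum]
  congr 1
  rw [EuclideanSpace.norm_sq_eq, neg_div, sum_div, ← sum_neg_distrib]
  refine sum_congr rfl fun i _ ↦ ?_
  simp [lpt]
  ring

lemma pi_div_eight_le_inv_two_mul_sq {ℓ : ℝ} (hℓ0 : 0 < ℓ) (hℓ : ℓ ≤ 2 / √π) :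
    π / 8 ≤ (2 * ℓ ^ 2)⁻¹ := by
  have hsq : ℓ ^ 2 ≤ 4 / π := by
    calc ℓ ^ 2 ≤ (2 / √π) ^ 2 := pow_le_pow_left₀ hℓ0.le hℓ 2
      _ = 4 / π := by rw [div_pow, sq_sqrt pi_pos.le]; norm_num
  rw [show π / 8 = (2 * (4 / π))⁻¹ by field_simp; ring]
  exact inv_anti₀ (by positivity) (by linarith)

theorem stmt_1 (d : ℕ) (ℓ h : ℝ) (hℓ0 : 0 < ℓ)
    (hℓ : ℓ ≤ 2 / Real.sqrt Real.pi) (hh0 : 0 < h) (hh1 : h < 1)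
    (x : EuclideanSpace ℝ (Fin d)) (hx : ∀ i, x i ∈ Set.Icc (-1 : ℝ) 1) :
    |∑' n : {n : Fin d → ℤ // n ≠ 0}, G d ℓ (x + lpt d h⁻¹ n.1)|
      ≤ 2 * d * 3 ^ d * Real.exp (-(1 / 2) * ((h⁻¹ - 1) / ℓ) ^ 2) := by
  set c := (2 * ℓ ^ 2)⁻¹
  have hc : π / 8 ≤ c := pi_div_eight_le_inv_two_mul_sq hℓ0 hℓ
  have hδ : 1 ≤ h⁻¹ := one_le_inv₀ hh0 |>.mpr hh1.le
  have hsplit := tsum_indicator_prod_le (fun i (k : ℤ) ↦ rexp (-c * (x i + h⁻¹ * k) ^ 2))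
    (fun _ _ ↦ (exp_pos _).le)
    (fun i ↦ summable_exp_neg_mul_add_mul_sq (lt_of_lt_of_le (by positivity) hc) (by positivity) _)
    (fun i ↦ tsum_exp_neg_mul_add_mul_sq_le_three hc hδ _)
    (fun i ↦ tsum_indicator_exp_neg_mul_add_mul_sq_le hc hδ (abs_le.mpr (hx i)))
  simp_rw [G_add_lpt_eq_prod]
  rw [abs_of_nonneg (tsum_nonneg fun _ ↦ prod_nonneg fun _ _ ↦ (exp_pos _).le)]
  refine ((tsum_subtype ({0}ᶜ : Set (Fin d → ℤ))
    fun n ↦ ∏ i, rexp (-c * (x i + h⁻¹ * n i) ^ 2)).trans_le hsplit).trans ?_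
  have hexp : -(1 / 2) * ((h⁻¹ - 1) / ℓ) ^ 2 = -c * (h⁻¹ - 1) ^ 2 := by
    simp only [c]
    field_simp
  rw [hexp]
  calc (d : ℝ) * 3 ^ (d - 1) * (4 * rexp (-c * (h⁻¹ - 1) ^ 2))
      ≤ d * 3 ^ (d - 1) * (6 * rexp (-c * (h⁻¹ - 1) ^ 2)) := by gcongr; norm_num
    _ = 2 * d * 3 ^ d * rexp (-c * (h⁻¹ - 1) ^ 2) := by
        rcases d with _ | d
        · simp
        · simp only [Nat.add_sub_cancel, pow_succ]
          ring
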